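/- For each n ≥ 2 let c_n, d_n > 0 with c_n, d_n = o(log n), p_n = c_n/n ∈ (0,1), q_n = d_n/n ∈ (0,1), let the prior on Θ_n be uniform, let θ_n ∈ Θ_n, and fix a ∈ (0, 1/2). If there is a constant C > 1 such that (√c_n − √d_n)² > 4C(1 − log(a)) for all sufficiently large n, then P_{θ_n} Π(B_n(θ_n, ⌈a·n⌉) | X^n) → 1, i.e. the posterior recovers the true community assignment almost-exactly with error rate k_n = ⌈a·n⌉. -/

import Mathlib

open Finset Real Filter

/-- The set of potential edges of an `n`-vertex graph: pairs `(i,j)` with `i < j`. -/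
abbrev Edge (n : ℕ) := {e : Fin n × Fin n // e.1 < e.2}

/-- An observed graph: an edge indicator for each potential edge. -/
abbrev ObsGraph (n : ℕ) := Edge n → Bool

/-- Edge probability under assignment `θ`: `p` within communities, `q` between. -/
noncomputable def edgeProb {n : ℕ} (p q : ℝ) (θ : Fin n → Bool) (e : Edge n) : ℝ :=
  if θ e.val.1 = θ e.val.2 then p else q

/-- Probability mass function of the observed graph under `θ`. -/
noncomputable def graphPMF {n : ℕ} (p q : ℝ) (θ : Fin n → Bool) (x : ObsGraph n) : ℝ :=
  ∏ e : Edge n, if x e then edgeProb p q θ e else 1 - edgeProb p q θ e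

/-- Hellinger affinity of Bernoulli parameters. -/
noncomputable def rho (p q : ℝ) : ℝ := Real.sqrt (p * q) + Real.sqrt ((1 - p) * (1 - q))

/-- Edges whose probability changes from `p` to `q` when replacing `θ` by `η`. -/
def D1 {n : ℕ} (θ η : Fin n → Bool) : Finset (Fin n × Fin n) :=
  Finset.univ.filter fun e => e.1 < e.2 ∧ θ e.1 = θ e.2 ∧ η e.1 ≠ η e.2

/-- Edges whose probability changes from `q` to `p` when replacing `θ` by `η`. -/
def D2 {n : ℕ} (θ η : Fin n → Bool) : Finset (Fin n × Fin n) :=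
  Finset.univ.filter fun e => e.1 < e.2 ∧ θ e.1 ≠ θ e.2 ∧ η e.1 = η e.2

/-- Hamming distance. -/
def hdist {n : ℕ} (θ η : Fin n → Bool) : ℕ := (Finset.univ.filter fun i => θ i ≠ η i).card

/-- The metric `k(θ,η) = h(θ,η) ∧ (n - h(θ,η))`. -/
def kdist {n : ℕ} (θ η : Fin n → Bool) : ℕ := min (hdist θ η) (n - hdist θ η)

/-- Size of the smallest community. -/
def countOnes {n : ℕ} (θ : Fin n → Bool) : ℕ := (Finset.univ.filter fun i => θ i = true).card

/-- The parameter space `Θ_n`. -/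
def Theta (n : ℕ) : Finset (Fin n → Bool) :=
  Finset.univ.filter fun θ => 2 * countOnes θ ≤ n ∧
    ∀ i : Fin n, 2 * countOnes θ = n → (i : ℕ) = 0 → θ i = false

/-- Posterior mass of `A ⊆ Θ_n` given data `x`, under prior mass function `π`. -/
noncomputable def postMass {n : ℕ} (p q : ℝ) (pri : (Fin n → Bool) → ℝ)
    (A : Finset (Fin n → Bool)) (x : ObsGraph n) : ℝ :=
  (∑ η ∈ A, pri η * graphPMF p q η x) / (∑ η ∈ Theta n, pri η * graphPMF p q η x)

/-- `P_θ`-expectation of the posterior mass of `A`. -/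
noncomputable def expPostMass {n : ℕ} (p q : ℝ) (pri : (Fin n → Bool) → ℝ)
    (θ : Fin n → Bool) (A : Finset (Fin n → Bool)) : ℝ :=
  ∑ x : ObsGraph n, graphPMF p q θ x * postMass p q pri A x

/-- The uniform prior on `Θ_n`. -/
noncomputable def unifPrior (n : ℕ) : (Fin n → Bool) → ℝ := fun _ => ((2:ℝ) ^ (n - 1))⁻¹

/-- Hamming ball `B_n(θ,k)` inside `Θ_n`. -/
def hball {n : ℕ} (θ : Fin n → Bool) (k : ℕ) : Finset (Fin n → Bool) :=
  (Theta n).filter fun η => kdist η θ ≤ k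

/-!
Under the uniform prior, the posterior mass of `η` given `x` is at most `√(p_η(x) / p_θ(x))`
(the denominator dominates both `p_θ(x)` and `p_η(x)`), so `P_θ Π(η | X)` is at most the
Hellinger affinity `∑ₓ √(p_θ(x) p_η(x))`. It factorises over edges and equals `ρ^(h (n - h))`
with `h = h(θ, η)`: exactly the edges joining the set where `θ` and `η` differ to its complement
change law. Now `ρ ≤ exp (-(√p - √q)² / 2) ≤ exp (-2 C (1 - log a) / n)` and
`h (n - h) ≥ k n / 2` for `k = k(θ, η)`, while at most `2 binom(n, k) ≤ 2 (e / a)^k` assignments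
lie at distance `k ≥ a n`. So each distance `k > ⌈a n⌉` contributes at most
`2 exp (-(C - 1)(1 - log a) a n)`, and the posterior mass outside the ball is `O(n e^{-b n})`
for some `b > 0`.
-/

lemma tendsto_natCast_mul_exp_neg_mul_atTop {b : ℝ} (hb : 0 < b) :
    Tendsto (fun n : ℕ => (n : ℝ) * exp (-(b * n))) atTop (nhds 0) := by
  have := ((tendsto_pow_mul_exp_neg_atTop_nhds_zero 1).comp
    (tendsto_natCast_atTop_atTop.const_mul_atTop hb)).const_mul b⁻¹
  rw [mul_zero] at this
  refine this.congr fun n => ?_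
  simp only [Function.comp_apply, pow_one]
  field_simp

lemma mul_div_sum_le_sqrt {ι : Type*} {s : Finset ι} {f : ι → ℝ} (hf : ∀ i ∈ s, 0 ≤ f i)
    {i j : ι} (hi : i ∈ s) (hj : j ∈ s) : f i * (f j / ∑ k ∈ s, f k) ≤ √(f i * f j) := by
  rcases (sum_nonneg hf).eq_or_lt with hS | hS
  · rw [← hS, div_zero, mul_zero]
    exact sqrt_nonneg _
  have hprod : 0 ≤ f i * f j := mul_nonneg (hf i hi) (hf j hj)
  have hsqrt : √(f i * f j) ≤ ∑ k ∈ s, f k := by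
    rw [sqrt_le_left hS.le, sq]
    exact mul_le_mul (single_le_sum hf hi) (single_le_sum hf hj) (hf j hj) hS.le
  rw [← mul_div_assoc, div_le_iff₀ hS]
  calc f i * f j = √(f i * f j) * √(f i * f j) := (mul_self_sqrt hprod).symm
    _ ≤ √(f i * f j) * ∑ k ∈ s, f k := mul_le_mul_of_nonneg_left hsqrt (sqrt_nonneg _)

section Bernoulli

variable {ι : Type*} [Fintype ι] [DecidableEq ι]

lemma sum_prod_bernoulli (r : ι → ℝ) :
    ∑ x : ι → Bool, ∏ i, (if x i then r i else 1 - r i) = 1 := by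
  refine (Fintype.prod_sum fun i (b : Bool) => if b then r i else 1 - r i).symm.trans ?_
  simp

lemma sum_sqrt_prod_bernoulli {r s : ι → ℝ} (hr : ∀ i, r i ∈ Set.Icc (0:ℝ) 1)
    (hs : ∀ i, s i ∈ Set.Icc (0:ℝ) 1) :
    ∑ x : ι → Bool,
        √((∏ i, if x i then r i else 1 - r i) * ∏ i, if x i then s i else 1 - s i)
      = ∏ i, (√(r i * s i) + √((1 - r i) * (1 - s i))) := by
  have hnonneg : ∀ (x : ι → Bool) i,
      0 ≤ (if x i then r i else 1 - r i) * (if x i then s i else 1 - s i) := by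
    intro x i
    obtain ⟨hr0, hr1⟩ := hr i
    obtain ⟨hs0, hs1⟩ := hs i
    split <;> nlinarith
  simp_rw [← prod_mul_distrib, sqrt_prod _ fun i _ => hnonneg _ i]
  refine (Fintype.prod_sum fun i (b : Bool) =>
    √((if b then r i else 1 - r i) * (if b then s i else 1 - s i))).symm.trans ?_
  simp

end Bernoulli

section Likelihood

variable {n : ℕ} {p q : ℝ}

lemma edgeProb_mem_Ioo (hp : p ∈ Set.Ioo (0:ℝ) 1) (hq : q ∈ Set.Ioo (0:ℝ) 1)
    (θ : Fin n → Bool) (e : Edge n) : edgeProb p q θ e ∈ Set.Ioo (0:ℝ) 1 := by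
  unfold edgeProb; split <;> assumption

lemma graphPMF_pos (hp : p ∈ Set.Ioo (0:ℝ) 1) (hq : q ∈ Set.Ioo (0:ℝ) 1)
    (θ : Fin n → Bool) (x : ObsGraph n) : 0 < graphPMF p q θ x :=
  prod_pos fun e _ => by
    obtain ⟨h0, h1⟩ := edgeProb_mem_Ioo hp hq θ e
    split <;> linarith

lemma sum_graphPMF (θ : Fin n → Bool) : ∑ x : ObsGraph n, graphPMF p q θ x = 1 :=
  sum_prod_bernoulli _

lemma rho_nonneg (p q : ℝ) : 0 ≤ rho p q :=
  add_nonneg (sqrt_nonneg _) (sqrt_nonneg _)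

lemma rho_comm (p q : ℝ) : rho p q = rho q p := by
  simp only [rho, mul_comm]

lemma sqrt_edgeProb_mul_add (hp : p ∈ Set.Ioo (0:ℝ) 1) (hq : q ∈ Set.Ioo (0:ℝ) 1)
    (θ η : Fin n → Bool) (e : Edge n) :
    √(edgeProb p q θ e * edgeProb p q η e)
        + √((1 - edgeProb p q θ e) * (1 - edgeProb p q η e))
      = if ¬(θ e.1.1 = θ e.1.2 ↔ η e.1.1 = η e.1.2) then rho p q else 1 := by
  obtain ⟨hp0, hp1⟩ := hp
  obtain ⟨hq0, hq1⟩ := hq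
  unfold edgeProb
  split_ifs <;> first
    | tauto
    | simp only [sqrt_mul_self, hp0.le, hq0.le, sub_nonneg, hp1.le, hq1.le]; ring
    | exact rho_comm q p

lemma sum_sqrt_graphPMF_mul (hp : p ∈ Set.Ioo (0:ℝ) 1) (hq : q ∈ Set.Ioo (0:ℝ) 1)
    (θ η : Fin n → Bool) :
    ∑ x : ObsGraph n, √(graphPMF p q θ x * graphPMF p q η x)
      = rho p q ^ #{e : Edge n | ¬(θ e.1.1 = θ e.1.2 ↔ η e.1.1 = η e.1.2)} := by
  have hmem := fun (ξ : Fin n → Bool) e => Set.Ioo_subset_Icc_self (edgeProb_mem_Ioo hp hq ξ e)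
  rw [← prod_const, prod_filter]
  simp only [graphPMF]
  rw [sum_sqrt_prod_bernoulli (hmem θ) (hmem η)]
  exact prod_congr rfl fun e _ => sqrt_edgeProb_mul_add hp hq θ η e

end Likelihood

section Counting

variable {n : ℕ}

lemma card_edge_crossing (P : Fin n → Prop) [DecidablePred P] :
    #{e : Edge n | ¬(P e.1.1 ↔ P e.1.2)} = #{i | P i} * #{i | ¬P i} := by
  rw [← card_product]
  refine card_bij (fun e _ => if P e.1.1 then (e.1.1, e.1.2) else (e.1.2, e.1.1))
    (fun e he => ?_) (fun e₁ _ e₂ _ h => ?_) (fun ⟨i, j⟩ hij => ?_)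
  · simp only [mem_filter, mem_univ, true_and] at he
    split_ifs <;> simp_all
  · obtain ⟨⟨i₁, j₁⟩, h₁⟩ := e₁
    obtain ⟨⟨i₂, j₂⟩, h₂⟩ := e₂
    simp only [Subtype.mk.injEq, Prod.mk.injEq] at h h₁ h₂ ⊢
    split_ifs at h <;> grind
  · simp only [mem_product, mem_filter, mem_univ, true_and] at hij
    have hne : i ≠ j := fun h => hij.2 (h ▸ hij.1)
    rcases hne.lt_or_gt with h | h
    · exact ⟨⟨(i, j), h⟩, by simp [hij], by simp [hij]⟩
    · exact ⟨⟨(j, i), h⟩, by simp [hij], by simp [hij]⟩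

lemma hdist_le (θ η : Fin n → Bool) : hdist θ η ≤ n :=
  hammingDist_le_card_fintype.trans_eq (Fintype.card_fin n)

lemma hdist_comm (θ η : Fin n → Bool) : hdist θ η = hdist η θ := hammingDist_comm θ η

lemma card_cut_edges (θ η : Fin n → Bool) :
    #{e : Edge n | ¬(θ e.1.1 = θ e.1.2 ↔ η e.1.1 = η e.1.2)} = hdist θ η * (n - hdist θ η) := by
  have hcut : ∀ i j, (θ i = θ j ↔ η i = η j) ↔ (θ i ≠ η i ↔ θ j ≠ η j) := by
    intro i j
    cases θ i <;> cases θ j <;> cases η i <;> cases η j <;> decide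
  simp_rw [hcut]
  refine (card_edge_crossing fun i => θ i ≠ η i).trans ?_
  have := card_filter_add_card_filter_not (s := univ) (fun i : Fin n => θ i ≠ η i)
  simp only [card_univ, Fintype.card_fin] at this
  rw [hdist]
  congr 1
  omega

lemma card_hdist_eq_le (θ : Fin n → Bool) (k : ℕ) : #{η | hdist θ η = k} ≤ n.choose k := by
  calc #{η | hdist θ η = k}
      ≤ #(powersetCard k (univ : Finset (Fin n))) := by
        refine card_le_card_of_injOn (fun η => ({i | θ i ≠ η i} : Finset (Fin n)))
          (fun η hη => ?_) fun η₁ _ η₂ _ h => funext fun i => ?_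
        · simpa [mem_powersetCard, hdist] using hη
        · have := Finset.ext_iff.mp h i
          simp only [mem_filter, mem_univ, true_and] at this
          revert this
          cases θ i <;> cases η₁ i <;> cases η₂ i <;> decide
    _ = n.choose k := by simp

lemma card_kdist_eq_le (θ : Fin n → Bool) {k : ℕ} (hk : k ≤ n) :
    #{η | kdist η θ = k} ≤ 2 * n.choose k := by
  have hsub : univ.filter (fun η => kdist η θ = k)
      ⊆ univ.filter (fun η => hdist θ η = k) ∪ univ.filter (fun η => hdist θ η = n - k) := by
    intro η hη
    have hle := hdist_le θ η
    rw [mem_filter_univ, kdist, hdist_comm] at hη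
    rw [mem_union, mem_filter_univ, mem_filter_univ]
    omega
  calc #{η | kdist η θ = k}
      ≤ #{η | hdist θ η = k} + #{η | hdist θ η = n - k} :=
        (card_le_card hsub).trans (card_union_le _ _)
    _ ≤ n.choose k + n.choose (n - k) :=
        add_le_add (card_hdist_eq_le θ k) (card_hdist_eq_le θ (n - k))
    _ = 2 * n.choose k := by rw [Nat.choose_symm hk]; ring

lemma kdist_mul_le (θ η : Fin n → Bool) :
    kdist η θ * n ≤ 2 * (hdist θ η * (n - hdist θ η)) := by
  have hle := hdist_le θ η
  rw [kdist, hdist_comm η θ]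
  set h := hdist θ η
  obtain ⟨m, hm⟩ := Nat.exists_eq_add_of_le hle
  have hsub : n - h = m := by omega
  rw [hsub, hm]
  have h₁ : min h m * h ≤ m * h := Nat.mul_le_mul_right _ (min_le_right _ _)
  have h₂ : min h m * m ≤ h * m := Nat.mul_le_mul_right _ (min_le_left _ _)
  nlinarith

end Counting

section Estimates

lemma rho_le_exp {p q : ℝ} (hp : p ∈ Set.Icc (0:ℝ) 1) (hq : q ∈ Set.Icc (0:ℝ) 1) :
    rho p q ≤ exp (-((√p - √q) ^ 2 / 2)) := by
  obtain ⟨hp0, hp1⟩ := hp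
  obtain ⟨hq0, hq1⟩ := hq
  have hAMGM : √((1 - p) * (1 - q)) ≤ ((1 - p) + (1 - q)) / 2 := by
    rw [sqrt_le_left (by linarith)]
    nlinarith [sq_nonneg (p - q)]
  have hsq := sq_sqrt hp0
  have hsq' := sq_sqrt hq0
  calc rho p q ≤ 1 - (√p - √q) ^ 2 / 2 := by
        rw [rho, sqrt_mul hp0]
        nlinarith
    _ ≤ exp (-((√p - √q) ^ 2 / 2)) := one_sub_le_exp_neg _

lemma rho_div_le_exp {c d x : ℝ} (hx : 0 < x) (hc : c / x ∈ Set.Icc (0:ℝ) 1)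
    (hd : d / x ∈ Set.Icc (0:ℝ) 1) : rho (c / x) (d / x) ≤ exp (-((√c - √d) ^ 2 / (2 * x))) := by
  refine (rho_le_exp hc hd).trans_eq ?_
  rw [sqrt_div' c hx.le, sqrt_div' d hx.le, ← sub_div, div_pow, sq_sqrt hx.le]
  ring_nf

lemma choose_le_exp_mul {n k : ℕ} {a : ℝ} (ha : 0 < a) (hak : a * n ≤ k) :
    (n.choose k : ℝ) ≤ exp ((1 - log a) * k) := by
  calc (n.choose k : ℝ) ≤ (n : ℝ) ^ k / k.factorial := Nat.choose_le_pow_div k n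
    _ ≤ (k / a) ^ k / k.factorial := by
        gcongr
        rw [le_div_iff₀ ha]
        linarith
    _ = (k : ℝ) ^ k / k.factorial * exp (-log a) ^ k := by
        rw [exp_neg, exp_log ha, div_pow, inv_pow]
        ring
    _ ≤ exp k * exp (-log a) ^ k := by
        gcongr
        exact pow_div_factorial_le_exp _ k.cast_nonneg k
    _ = exp ((1 - log a) * k) := by
        rw [← exp_nat_mul, ← exp_add]
        ring_nf

variable {n : ℕ}

lemma pow_hdist_mul_le_exp {ρ lam : ℝ} (hn : 0 < n) (hρ0 : 0 ≤ ρ) (hlam : 0 ≤ lam)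
    (hρ : ρ ≤ exp (-(2 * lam / n))) (θ η : Fin n → Bool) :
    ρ ^ (hdist θ η * (n - hdist θ η)) ≤ exp (-(lam * kdist η θ)) := by
  have hkn : (kdist η θ : ℝ) * n ≤ 2 * (hdist θ η * (n - hdist θ η) : ℕ) := by
    exact_mod_cast kdist_mul_le θ η
  have hn' : (0 : ℝ) < n := by exact_mod_cast hn
  calc ρ ^ (hdist θ η * (n - hdist θ η))
      ≤ exp (-(2 * lam / n)) ^ (hdist θ η * (n - hdist θ η)) := by gcongr
    _ = exp (-(2 * lam / n * (hdist θ η * (n - hdist θ η) : ℕ))) := by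
        rw [← exp_nat_mul]
        ring_nf
    _ ≤ exp (-(lam * kdist η θ)) := by
        rw [exp_le_exp, neg_le_neg_iff, div_mul_eq_mul_div, le_div_iff₀ hn']
        nlinarith

lemma card_kdist_eq_mul_exp_le (θ : Fin n → Bool) {a lam : ℝ} {k : ℕ} (ha : 0 < a)
    (hak : a * n ≤ k) (hkn : k ≤ n) (hlam : 1 - log a ≤ lam) :
    #{η | kdist η θ = k} * exp (-(lam * k)) ≤ 2 * exp (-((lam - (1 - log a)) * a * n)) := by
  calc #{η | kdist η θ = k} * exp (-(lam * k))
      ≤ (2 * exp ((1 - log a) * k)) * exp (-(lam * k)) := by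
        gcongr
        calc (#{η | kdist η θ = k} : ℝ) ≤ (2 * n.choose k : ℕ) := by
              exact_mod_cast card_kdist_eq_le θ hkn
          _ ≤ 2 * exp ((1 - log a) * k) := by
              push_cast
              gcongr
              exact choose_le_exp_mul ha hak
    _ = 2 * exp (-((lam - (1 - log a)) * k)) := by
        rw [mul_assoc, ← exp_add]
        ring_nf
    _ ≤ 2 * exp (-((lam - (1 - log a)) * a * n)) := by
        rw [mul_le_mul_iff_right₀ two_pos, exp_le_exp, neg_le_neg_iff, mul_assoc]
        exact mul_le_mul_of_nonneg_left hak (by linarith)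

lemma sum_pow_hdist_mul_le {ρ lam a : ℝ} {k₀ : ℕ} (hn : 0 < n) (hρ0 : 0 ≤ ρ)
    (hρ : ρ ≤ exp (-(2 * lam / n))) (ha : 0 < a) (hak₀ : a * n ≤ k₀) (hlam₀ : 0 ≤ lam)
    (hlam : 1 - log a ≤ lam) (θ : Fin n → Bool) {s : Finset (Fin n → Bool)}
    (hs : ∀ η ∈ s, k₀ < kdist η θ) :
    ∑ η ∈ s, ρ ^ (hdist θ η * (n - hdist θ η))
      ≤ 2 * (n * exp (-((lam - (1 - log a)) * a * n))) := by
  have hmaps : ∀ η ∈ s, kdist η θ ∈ Icc (k₀ + 1) n := fun η hη =>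
    mem_Icc.2 ⟨hs η hη, (min_le_right _ _).trans (Nat.sub_le _ _)⟩
  rw [← sum_fiberwise_of_maps_to hmaps]
  calc ∑ k ∈ Icc (k₀ + 1) n, ∑ η ∈ s with kdist η θ = k, ρ ^ (hdist θ η * (n - hdist θ η))
      ≤ ∑ k ∈ Icc (k₀ + 1) n, #{η | kdist η θ = k} * exp (-(lam * k)) := by
        refine sum_le_sum fun k _ => ?_
        calc ∑ η ∈ s with kdist η θ = k, ρ ^ (hdist θ η * (n - hdist θ η))
            ≤ ∑ η ∈ s with kdist η θ = k, exp (-(lam * k)) := sum_le_sum fun η hη =>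
              (mem_filter.1 hη).2 ▸ pow_hdist_mul_le_exp hn hρ0 hlam₀ hρ θ η
          _ ≤ #{η | kdist η θ = k} * exp (-(lam * k)) := by
              rw [sum_const, nsmul_eq_mul]
              gcongr
              exact subset_univ s
    _ ≤ ∑ k ∈ Icc (k₀ + 1) n, 2 * exp (-((lam - (1 - log a)) * a * n)) := by
        refine sum_le_sum fun k hk => ?_
        obtain ⟨hk₀, hkn⟩ := mem_Icc.1 hk
        have hak : a * n ≤ k := hak₀.trans (by exact_mod_cast (Nat.le_succ k₀).trans hk₀)
        exact card_kdist_eq_mul_exp_le θ ha hak hkn hlam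
    _ ≤ 2 * (n * exp (-((lam - (1 - log a)) * a * n))) := by
        rw [sum_const, nsmul_eq_mul, Nat.card_Icc, mul_left_comm]
        gcongr
        exact_mod_cast (by omega : n + 1 - (k₀ + 1) ≤ n)

end Estimates

section Posterior

variable {n : ℕ} {p q w : ℝ}

lemma postMass_const (hw : w ≠ 0) (A : Finset (Fin n → Bool)) (x : ObsGraph n) :
    postMass p q (fun _ => w) A x
      = (∑ η ∈ A, graphPMF p q η x) / ∑ η ∈ Theta n, graphPMF p q η x := by
  simp only [postMass, ← mul_sum]
  exact mul_div_mul_left _ _ hw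

lemma expPostMass_nonneg (hp : p ∈ Set.Ioo (0:ℝ) 1) (hq : q ∈ Set.Ioo (0:ℝ) 1) (hw : w ≠ 0)
    (θ : Fin n → Bool) (A : Finset (Fin n → Bool)) :
    0 ≤ expPostMass p q (fun _ => w) θ A := by
  have hpmf := fun (η : Fin n → Bool) x => (graphPMF_pos hp hq η x).le
  refine sum_nonneg fun x _ => mul_nonneg (hpmf θ x) ?_
  rw [postMass_const hw]
  exact div_nonneg (sum_nonneg fun η _ => hpmf η x) (sum_nonneg fun η _ => hpmf η x)

lemma expPostMass_add_sdiff (hp : p ∈ Set.Ioo (0:ℝ) 1) (hq : q ∈ Set.Ioo (0:ℝ) 1) (hw : w ≠ 0)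
    {θ : Fin n → Bool} (hθ : θ ∈ Theta n) {A : Finset (Fin n → Bool)}
    (hA : A ⊆ Theta n) :
    expPostMass p q (fun _ => w) θ A + expPostMass p q (fun _ => w) θ (Theta n \ A) = 1 := by
  have hpos : ∀ x, 0 < ∑ η ∈ Theta n, graphPMF p q η x := fun x =>
    sum_pos' (fun η _ => (graphPMF_pos hp hq η x).le) ⟨θ, hθ, graphPMF_pos hp hq θ x⟩
  rw [expPostMass, expPostMass, ← sum_add_distrib, ← sum_graphPMF θ]
  refine sum_congr rfl fun x _ => ?_
  rw [postMass_const hw, postMass_const hw, ← mul_add, ← add_div, add_comm, sum_sdiff hA,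
    div_self (hpos x).ne', mul_one]

lemma expPostMass_le_sum_rho_pow (hp : p ∈ Set.Ioo (0:ℝ) 1) (hq : q ∈ Set.Ioo (0:ℝ) 1)
    (hw : w ≠ 0) {θ : Fin n → Bool} (hθ : θ ∈ Theta n)
    {A : Finset (Fin n → Bool)} (hA : A ⊆ Theta n) :
    expPostMass p q (fun _ => w) θ A
      ≤ ∑ η ∈ A, rho p q ^ #{e : Edge n | ¬(θ e.1.1 = θ e.1.2 ↔ η e.1.1 = η e.1.2)} := by
  simp_rw [← sum_sqrt_graphPMF_mul hp hq θ]
  rw [sum_comm, expPostMass]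
  refine sum_le_sum fun x _ => ?_
  rw [postMass_const hw, sum_div, mul_sum]
  exact sum_le_sum fun η hη =>
    mul_div_sum_le_sqrt (fun ξ _ => (graphPMF_pos hp hq ξ x).le) hθ (hA hη)

lemma expPostMass_sdiff_hball_le {lam a : ℝ} (hn : 0 < n) (hp : p ∈ Set.Ioo (0:ℝ) 1)
    (hq : q ∈ Set.Ioo (0:ℝ) 1) (hw : w ≠ 0) {θ : Fin n → Bool} (hθ : θ ∈ Theta n) (ha : 0 < a)
    (hρ : rho p q ≤ exp (-(2 * lam / n))) (hlam₀ : 0 ≤ lam) (hlam : 1 - log a ≤ lam) :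
    expPostMass p q (fun _ => w) θ (Theta n \ hball θ ⌈a * n⌉₊)
      ≤ 2 * (n * exp (-((lam - (1 - log a)) * a * n))) := by
  have hfar : ∀ η ∈ Theta n \ hball θ ⌈a * n⌉₊, ⌈a * n⌉₊ < kdist η θ := fun η hη =>
    not_le.1 fun h => (mem_sdiff.1 hη).2 (mem_filter.2 ⟨(mem_sdiff.1 hη).1, h⟩)
  calc expPostMass p q (fun _ => w) θ (Theta n \ hball θ ⌈a * n⌉₊)
      ≤ ∑ η ∈ Theta n \ hball θ ⌈a * n⌉₊,
          rho p q ^ #{e : Edge n | ¬(θ e.1.1 = θ e.1.2 ↔ η e.1.1 = η e.1.2)} :=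
        expPostMass_le_sum_rho_pow hp hq hw hθ sdiff_subset
    _ = ∑ η ∈ Theta n \ hball θ ⌈a * n⌉₊, rho p q ^ (hdist θ η * (n - hdist θ η)) := by
        simp_rw [card_cut_edges]
    _ ≤ 2 * (n * exp (-((lam - (1 - log a)) * a * n))) :=
        sum_pow_hdist_mul_le hn (rho_nonneg p q) hρ ha (Nat.le_ceil _) hlam₀ hlam θ hfar

end Posterior

theorem stmt12_general (c d : ℕ → ℝ)
    (hp : ∀ n, 2 ≤ n → c n / n ∈ Set.Ioo (0:ℝ) 1)
    (hq : ∀ n, 2 ≤ n → d n / n ∈ Set.Ioo (0:ℝ) 1)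
    (θ : (n : ℕ) → Fin n → Bool) (hθ : ∀ n, 2 ≤ n → θ n ∈ Theta n)
    (a : ℝ) (ha : a ∈ Set.Ioo (0:ℝ) (1/2))
    (hcond : ∃ C : ℝ, 1 < C ∧ ∀ᶠ n : ℕ in Filter.atTop,
      4 * C * (1 - Real.log a) < (Real.sqrt (c n) - Real.sqrt (d n))^2) :
    Filter.Tendsto (fun n : ℕ =>
        expPostMass (c n / n) (d n / n) (unifPrior n) (θ n)
          (hball (θ n) ⌈a * n⌉₊))
      Filter.atTop (nhds 1) := by
  obtain ⟨C, hC, hsep⟩ := hcond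
  obtain ⟨ha₀, ha₁⟩ := ha
  set L := 1 - log a
  have hL : 0 < L := by linarith [log_neg ha₀ (by linarith)]
  have hw : ∀ n : ℕ, ((2:ℝ) ^ (n - 1))⁻¹ ≠ 0 := fun n => by positivity
  set E : ℕ → ℝ := fun n =>
    expPostMass (c n / n) (d n / n) (unifPrior n) (θ n) (Theta n \ hball (θ n) ⌈a * n⌉₊)
  have hcompl : ∀ᶠ n in atTop, 1 - E n
      = expPostMass (c n / n) (d n / n) (unifPrior n) (θ n) (hball (θ n) ⌈a * n⌉₊) := by
    filter_upwards [eventually_ge_atTop 2] with n hn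
    exact (eq_sub_of_add_eq (expPostMass_add_sdiff (hp n hn) (hq n hn) (hw n) (hθ n hn)
      (filter_subset _ _))).symm
  have hE : ∀ᶠ n in atTop, 0 ≤ E n ∧ E n ≤ 2 * (n * exp (-((C * L - L) * a * n))) := by
    filter_upwards [eventually_ge_atTop 2, hsep] with n hn hsepn
    have hn₀ : (0 : ℝ) < n := by positivity
    have hρ : rho (c n / n) (d n / n) ≤ exp (-(2 * (C * L) / n)) := by
      refine (rho_div_le_exp hn₀ (Set.Ioo_subset_Icc_self (hp n hn))
        (Set.Ioo_subset_Icc_self (hq n hn))).trans (exp_le_exp.2 (neg_le_neg ?_))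
      rw [div_le_div_iff₀ hn₀ (by positivity)]
      nlinarith
    exact ⟨expPostMass_nonneg (hp n hn) (hq n hn) (hw n) _ _,
      expPostMass_sdiff_hball_le (by omega) (hp n hn) (hq n hn) (hw n) (hθ n hn) ha₀ hρ
        (by positivity) (by nlinarith)⟩
  have hbound := (tendsto_natCast_mul_exp_neg_mul_atTop
    (mul_pos (by nlinarith : 0 < C * L - L) ha₀)).const_mul 2
  rw [mul_zero] at hbound
  have hE₀ : Tendsto E atTop (nhds 0) := tendsto_of_tendsto_of_tendsto_of_le_of_le'
    tendsto_const_nhds hbound (hE.mono fun _ h => h.1) (hE.mono fun _ h => h.2)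
  simpa using (tendsto_const_nhds.sub hE₀).congr' hcompl

/-- if `(√c_n − √d_n)² > 4C(1 − log a)` eventually, for some `C > 1`,
then the posterior recovers the true assignment almost-exactly with error rate `⌈a n⌉`. -/
theorem stmt12 (c d : ℕ → ℝ) (hc0 : ∀ n, 2 ≤ n → 0 < c n) (hd0 : ∀ n, 2 ≤ n → 0 < d n)
    (hco : c =o[Filter.atTop] fun n : ℕ => Real.log n)
    (hdo : d =o[Filter.atTop] fun n : ℕ => Real.log n)
    (hp : ∀ n, 2 ≤ n → c n / n ∈ Set.Ioo (0:ℝ) 1)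
    (hq : ∀ n, 2 ≤ n → d n / n ∈ Set.Ioo (0:ℝ) 1)
    (θ : (n : ℕ) → Fin n → Bool) (hθ : ∀ n, 2 ≤ n → θ n ∈ Theta n)
    (a : ℝ) (ha : a ∈ Set.Ioo (0:ℝ) (1/2))
    (hcond : ∃ C : ℝ, 1 < C ∧ ∀ᶠ n : ℕ in Filter.atTop,
      4 * C * (1 - Real.log a) < (Real.sqrt (c n) - Real.sqrt (d n))^2) :
    Filter.Tendsto (fun n : ℕ =>
        expPostMass (c n / n) (d n / n) (unifPrior n) (θ n)
          (hball (θ n) ⌈a * n⌉₊))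
      Filter.atTop (nhds 1) :=
  stmt12_general c d hp hq θ hθ a ha hcond
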